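/- arXiv:1909.04613 — 3 statements merged into one kernel-verified Lean document; each statement's English description precedes it below -/
import Mathlib

section
/- (Peierls–Bogoliubov inequality) Let F and G be Hermitian n×n matrices with tr(exp(G)) = 1. Then log(tr(exp(F+G))) ≥ tr(F·exp(G)). -/
/-!
Diagonalize `G = V diag(λ) Vᵀ`, so that `∑ exp λᵢ = 1`, and let `B = Vᵀ (F + G) V`. Then
`tr (F exp G) = ∑ exp λᵢ (Bᵢᵢ - λᵢ)`, which Jensen's inequality for `exp` with the weights
`exp λᵢ` bounds by `log ∑ exp Bᵢᵢ` (Gibbs' variational inequality). Jensen again, now with the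
weights given by the squared entries of an orthogonal matrix diagonalizing `B`, gives
`exp Bᵢᵢ ≤ (exp B)ᵢᵢ`, and `tr (exp B) = tr (exp (F + G))`.
-/

open Matrix

lemma Real.exp_sum_mul_le_sum_mul_exp {ι : Type*} [Fintype ι] {w : ι → ℝ} (x : ι → ℝ)
    (hw : ∀ i, 0 ≤ w i) (hw1 : ∑ i, w i = 1) :
    Real.exp (∑ i, w i * x i) ≤ ∑ i, w i * Real.exp (x i) := by
  simpa only [smul_eq_mul] using
    convexOn_exp.map_sum_le (t := Finset.univ) (fun i _ => hw i) hw1 (fun i _ => Set.mem_univ (x i))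

lemma Real.sum_exp_mul_sub_le_log_sum_exp {ι : Type*} [Fintype ι] {l : ι → ℝ} (b : ι → ℝ)
    (hl : ∑ i, Real.exp (l i) = 1) :
    ∑ i, Real.exp (l i) * (b i - l i) ≤ Real.log (∑ i, Real.exp (b i)) := by
  have hne : (Finset.univ : Finset ι).Nonempty := Finset.nonempty_of_sum_ne_zero (hl ▸ one_ne_zero)
  rw [Real.le_log_iff_exp_le (Finset.sum_pos (fun i _ => Real.exp_pos _) hne)]
  calc Real.exp (∑ i, Real.exp (l i) * (b i - l i))
      ≤ ∑ i, Real.exp (l i) * Real.exp (b i - l i) :=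
        Real.exp_sum_mul_le_sum_mul_exp _ (fun i => (Real.exp_pos _).le) hl
    _ = ∑ i, Real.exp (b i) := by simp only [← Real.exp_add, add_sub_cancel]

namespace Matrix

variable {ι : Type*} [Fintype ι] [DecidableEq ι]

lemma exp_unitary_conj {𝕜 : Type*} [RCLike 𝕜] (u : unitary (Matrix ι ι 𝕜)) (A : Matrix ι ι 𝕜) :
    NormedSpace.exp ((u : Matrix ι ι 𝕜) * A * star (u : Matrix ι ι 𝕜)) =
      u * NormedSpace.exp A * star (u : Matrix ι ι 𝕜) :=
  exp_units_conj (Unitary.toUnits u) A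

lemma trace_exp_star_unitary_conj {𝕜 : Type*} [RCLike 𝕜] (u : unitary (Matrix ι ι 𝕜))
    (A : Matrix ι ι 𝕜) :
    (NormedSpace.exp (star (u : Matrix ι ι 𝕜) * A * u)).trace = (NormedSpace.exp A).trace := by
  have hconj := exp_unitary_conj (star u) A
  simp only [Unitary.coe_star, star_star] at hconj
  rw [hconj, trace_mul_cycle, Unitary.mul_star_self_of_mem u.2, one_mul]

lemma unitary_conj_diagonal_apply_self (u : unitary (Matrix ι ι ℝ)) (d : ι → ℝ) (i : ι) :
    ((u : Matrix ι ι ℝ) * diagonal d * star (u : Matrix ι ι ℝ)) i i =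
      ∑ j, (u : Matrix ι ι ℝ) i j ^ 2 * d j := by
  rw [mul_apply]
  simp only [mul_diagonal, star_apply, star_trivial]
  exact Finset.sum_congr rfl fun j _ => by ring

lemma unitary_sum_sq_row (u : unitary (Matrix ι ι ℝ)) (i : ι) :
    ∑ j, (u : Matrix ι ι ℝ) i j ^ 2 = 1 := by
  simpa using (unitary_conj_diagonal_apply_self u 1 i).symm

lemma IsHermitian.exp_eq {A : Matrix ι ι ℝ} (hA : A.IsHermitian) :
    NormedSpace.exp A = (hA.eigenvectorUnitary : Matrix ι ι ℝ) *
      diagonal (fun i => Real.exp (hA.eigenvalues i)) *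
        star (hA.eigenvectorUnitary : Matrix ι ι ℝ) := by
  conv_lhs => rw [hA.spectral_theorem, Unitary.conjStarAlgAut_apply]
  rw [exp_unitary_conj, exp_diagonal, Pi.exp_def, RCLike.ofReal_real_eq_id, Real.exp_eq_exp_ℝ]
  rfl

lemma IsHermitian.star_eigenvectorUnitary_mul_mul {A : Matrix ι ι ℝ} (hA : A.IsHermitian) :
    star (hA.eigenvectorUnitary : Matrix ι ι ℝ) * A * hA.eigenvectorUnitary =
      diagonal hA.eigenvalues := by
  simpa only [Unitary.conjStarAlgAut_apply, Unitary.coe_star, star_star,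
    RCLike.ofReal_real_eq_id, CompTriple.comp_eq] using hA.conjStarAlgAut_star_eigenvectorUnitary

lemma IsHermitian.trace_exp {A : Matrix ι ι ℝ} (hA : A.IsHermitian) :
    (NormedSpace.exp A).trace = ∑ i, Real.exp (hA.eigenvalues i) := by
  rw [hA.exp_eq, trace_mul_cycle, Unitary.coe_star_mul_self, one_mul, trace_diagonal]

lemma IsHermitian.exp_apply_self_le {A : Matrix ι ι ℝ} (hA : A.IsHermitian) (i : ι) :
    Real.exp (A i i) ≤ NormedSpace.exp A i i := by
  conv_lhs => rw [hA.spectral_theorem, Unitary.conjStarAlgAut_apply]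
  rw [hA.exp_eq, unitary_conj_diagonal_apply_self, unitary_conj_diagonal_apply_self]
  exact Real.exp_sum_mul_le_sum_mul_exp _ (fun j => sq_nonneg _)
    (unitary_sum_sq_row hA.eigenvectorUnitary i)

lemma IsHermitian.sum_exp_diag_le_trace_exp {A : Matrix ι ι ℝ} (hA : A.IsHermitian) :
    ∑ i, Real.exp (A i i) ≤ (NormedSpace.exp A).trace :=
  Finset.sum_le_sum fun i _ => hA.exp_apply_self_le i

end Matrix

/-- Peierls–Bogoliubov inequality: for Hermitian (real symmetric) n×n
matrices F, G with tr(exp G) = 1, we have log(tr(exp(F+G))) ≥ tr(F·exp G). -/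
theorem peierls_bogoliubov {n : ℕ} (F G : Matrix (Fin n) (Fin n) ℝ)
    (hF : F.IsHermitian) (hG : G.IsHermitian)
    (htr : (NormedSpace.exp G).trace = 1) :
    (F * NormedSpace.exp G).trace ≤ Real.log ((NormedSpace.exp (F + G)).trace) := by
  set V : Matrix (Fin n) (Fin n) ℝ := ↑hG.eigenvectorUnitary
  set l := hG.eigenvalues
  set B := star V * (F + G) * V
  have hB : B.IsHermitian := isHermitian_conjTranspose_mul_mul V (hF.add hG)
  have hexpG : NormedSpace.exp G = V * diagonal (fun i => Real.exp (l i)) * star V := hG.exp_eq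
  have hsum : ∑ i, Real.exp (l i) = 1 := hG.trace_exp ▸ htr
  have htrace : (F * NormedSpace.exp G).trace = ∑ i, Real.exp (l i) * (B i i - l i) := by
    have hF' : star V * F * V = B - diagonal l := by
      rw [← hG.star_eigenvectorUnitary_mul_mul]
      simp only [B, V]
      noncomm_ring
    rw [hexpG, ← mul_assoc, trace_mul_cycle, ← mul_assoc, hF', trace]
    simp only [diag_apply, mul_diagonal, Matrix.sub_apply, diagonal_apply_eq, mul_comm]
  have hpos : 0 < ∑ i, Real.exp (B i i) :=
    Finset.sum_pos (fun i _ => Real.exp_pos _) (Finset.nonempty_of_sum_ne_zero (hsum ▸ one_ne_zero))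
  calc (F * NormedSpace.exp G).trace = ∑ i, Real.exp (l i) * (B i i - l i) := htrace
    _ ≤ Real.log (∑ i, Real.exp (B i i)) := Real.sum_exp_mul_sub_le_log_sum_exp _ hsum
    _ ≤ Real.log ((NormedSpace.exp B).trace) := Real.log_le_log hpos hB.sum_exp_diag_le_trace_exp
    _ = Real.log ((NormedSpace.exp (F + G)).trace) := by rw [trace_exp_star_unitary_conj]
end

section
/- If T_l = Σ_{k=0}^{l} (−H)^k / k! is the Taylor truncation of the matrix exponential of a Hermitian matrix H at an even degree l, then T_l is positive semidefinite. -/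
/-!
The truncation is `p(-H)` for the Taylor polynomial `p = ∑_{k ≤ l} X^k / k!`, so by the functional
calculus it suffices that `p ≥ 0` on `ℝ`. Since `p - p' = X^l / l! ≥ 0` for even `l`, the function
`p(x) e^{-x}` is antitone; it tends to `0` at `+∞`, hence it is nonnegative everywhere.
-/

open Matrix Polynomial Filter Finset
open scoped Nat

theorem Polynomial.eval_nonneg_of_eval_sub_derivative_nonneg {p : ℝ[X]}
    (hp : ∀ x, 0 ≤ (p - derivative p).eval x) (x : ℝ) : 0 ≤ p.eval x := by
  set g : ℝ → ℝ := fun x ↦ p.eval x / Real.exp x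
  have hg : ∀ y, HasDerivAt g (-(p - derivative p).eval y / Real.exp y) y := fun y ↦
    ((p.hasDerivAt y).fun_div (Real.hasDerivAt_exp y) (Real.exp_ne_zero y)).congr_deriv (by
      rw [eval_sub]; field_simp; ring)
  have hanti : Antitone g := antitone_of_hasDerivAt_nonpos hg fun y ↦
    div_nonpos_of_nonpos_of_nonneg (neg_nonpos.2 (hp y)) (Real.exp_pos y).le
  have hgx : 0 ≤ g x := le_of_tendsto p.tendsto_div_exp_atTop
    ((eventually_ge_atTop x).mono fun y hy ↦ hanti hy)
  simpa using (le_div_iff₀ (Real.exp_pos x)).1 hgx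

noncomputable def expTaylor (l : ℕ) : ℝ[X] := ∑ k ∈ range (l + 1), C (k ! : ℝ)⁻¹ * X ^ k

theorem expTaylor_sub_derivative (l : ℕ) :
    expTaylor l - derivative (expTaylor l) = C (l ! : ℝ)⁻¹ * X ^ l := by
  induction l with
  | zero => simp [expTaylor]
  | succ l ih =>
    have hlast : derivative (C ((l + 1)! : ℝ)⁻¹ * X ^ (l + 1)) = C (l ! : ℝ)⁻¹ * X ^ l := by
      rw [derivative_C_mul_X_pow, Nat.factorial_succ]
      push_cast
      field_simp
    rw [expTaylor, sum_range_succ, ← expTaylor, derivative_add, hlast]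
    linear_combination ih

theorem eval_expTaylor_nonneg {l : ℕ} (hl : Even l) (x : ℝ) : 0 ≤ (expTaylor l).eval x :=
  eval_nonneg_of_eval_sub_derivative_nonneg (fun y ↦ by
    rw [expTaylor_sub_derivative, eval_mul, eval_C, eval_X_pow]
    exact mul_nonneg (by positivity) (hl.pow_nonneg y)) x

theorem aeval_expTaylor {A : Type*} [Ring A] [Algebra ℝ A] (a : A) (l : ℕ) :
    aeval a (expTaylor l) = ∑ k ∈ range (l + 1), (k ! : ℝ)⁻¹ • a ^ k := by
  simp [expTaylor, Algebra.smul_def]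

open scoped MatrixOrder ComplexOrder in
theorem Matrix.IsHermitian.posSemidef_aeval {𝕜 n : Type*} [RCLike 𝕜] [Fintype n]
    [DecidableEq n] {A : Matrix n n 𝕜} (hA : A.IsHermitian) {p : ℝ[X]}
    (hp : ∀ x ∈ spectrum ℝ A, 0 ≤ p.eval x) : (aeval A p).PosSemidef := by
  rw [← nonneg_iff_posSemidef, ← cfc_polynomial p A hA.isSelfAdjoint]
  exact cfc_nonneg hp

/-- the Taylor truncation T_l = Σ_{k=0}^{l} (−H)^k/k! of the matrix exponential
of a Hermitian matrix H at an even degree l is positive semidefinite. -/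
theorem even_taylor_truncation_posSemidef {n : ℕ}
    (H : Matrix (Fin n) (Fin n) ℝ) (hH : H.IsHermitian) (l : ℕ) (hl : Even l) :
    (∑ k ∈ Finset.range (l + 1), ((k.factorial : ℝ))⁻¹ • (-H) ^ k).PosSemidef := by
  rw [← aeval_expTaylor]
  exact hH.neg.posSemidef_aeval fun x _ ↦ eval_expTaylor_nonneg hl x
end

section
/- Let ρ be an n×n positive semidefinite matrix with trace 1 written in 2×2 block form with blocks ρ₁₁ (of size |B|×|B|), ρ₁₂, ρ₂₁ = ρ₁₂ᵀ, ρ₂₂. Then ‖ρ₁₁‖_tr² + 2‖ρ₁₂‖_tr² + ‖ρ₂₂‖_tr² ≤ 1. -/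
open Matrix

/-- The old Mathlib `Matrix.PosSemidef.sqrt` (removed since), spelled out with its old definition. -/
noncomputable def posSemidefSqrt {n : Type*} [Fintype n] [DecidableEq n] {A : Matrix n n ℝ}
    (hA : A.PosSemidef) : Matrix n n ℝ :=
  hA.1.eigenvectorUnitary.1 * diagonal ((↑) ∘ (√·) ∘ hA.1.eigenvalues) *
  (star hA.1.eigenvectorUnitary : Matrix n n ℝ)

/-- Trace (Schatten-1) norm of a real matrix: trace of the psd square root of AᵀA. -/
noncomputable def traceNorm {m k : Type*} [Fintype m] [Fintype k] [DecidableEq k]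
    (A : Matrix m k ℝ) : ℝ :=
  (posSemidefSqrt (Matrix.posSemidef_conjTranspose_mul_self A)).trace

/-!
The diagonal blocks `P`, `Q` of `ρ` are positive semidefinite, so their trace norms are their
traces `p`, `q`, with `p + q = 1`, and it suffices to show `‖B‖_tr ^ 2 ≤ p * q` for the
off-diagonal block `B`. A singular value decomposition gives partial isometries `W`, `V` with
`‖B‖_tr = tr (Wᴴ B V)`. Compressing `ρ` by `diag(W, V)` keeps it positive semidefinite, so its
`2 × 2` principal minors and Cauchy–Schwarz give `tr (Wᴴ B V) ^ 2 ≤ tr (Wᴴ P W) * tr (Vᴴ Q V)`;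
finally, compression by a partial isometry does not increase the trace of a positive
semidefinite matrix.
-/

open scoped MatrixOrder in
theorem posSemidefSqrt_eq_cfcSqrt {n : Type*} [Fintype n] [DecidableEq n] {A : Matrix n n ℝ}
    (hA : A.PosSemidef) : posSemidefSqrt hA = CFC.sqrt A := by
  rw [CFC.sqrt_eq_cfc, cfc_nnreal_eq_real _ A, hA.1.cfc_eq]
  simp only [IsHermitian.cfc, Unitary.conjStarAlgAut_apply, posSemidefSqrt]
  congr 3
  funext i
  simp [hA.eigenvalues_nonneg i]

open scoped MatrixOrder in
theorem traceNorm_eq_trace {n : Type*} [Fintype n] [DecidableEq n] {A : Matrix n n ℝ}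
    (hA : A.PosSemidef) : traceNorm A = A.trace := by
  rw [traceNorm, posSemidefSqrt_eq_cfcSqrt, hA.isHermitian.eq, CFC.sqrt_mul_self A hA.nonneg]

theorem traceNorm_eq_sum_sqrt_eigenvalues {m k : Type*} [Fintype m] [Fintype k] [DecidableEq k]
    (A : Matrix m k ℝ) :
    traceNorm A = ∑ i, √((posSemidef_conjTranspose_mul_self A).1.eigenvalues i) := by
  rw [traceNorm, posSemidefSqrt, trace_mul_cycle, Unitary.coe_star_mul_self, Matrix.one_mul,
    trace_diagonal]
  rfl

section OrthogonalColumns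

variable {m k : Type*} [Fintype m] [Fintype k] [DecidableEq k] {A : Matrix m k ℝ} {s : k → ℝ}

-- `(s i)⁻¹ = 0` where `s i = 0`, so the corresponding (zero) columns of `A` stay zero.
theorem mul_diagonal_inv_partialIsometry (h : Aᴴ * A = diagonal (s ^ 2)) :
    A * diagonal s⁻¹ * (A * diagonal s⁻¹)ᴴ * (A * diagonal s⁻¹) = A * diagonal s⁻¹ := by
  have hs : ∀ i, (s i)⁻¹ * (s i)⁻¹ * s i ^ 2 * (s i)⁻¹ = (s i)⁻¹ := by
    intro i
    by_cases hi : s i = 0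
    · simp [hi]
    · field_simp
  calc _ = A * (diagonal s⁻¹ * diagonal s⁻¹ * (Aᴴ * A) * diagonal s⁻¹) := by
        simp only [conjTranspose_mul, diagonal_conjTranspose, star_trivial, Matrix.mul_assoc]
    _ = _ := by simp only [h, diagonal_mul_diagonal, Pi.inv_apply, Pi.pow_apply, hs]; rfl

theorem conjTranspose_mul_diagonal_inv_mul_self (h : Aᴴ * A = diagonal (s ^ 2)) :
    (A * diagonal s⁻¹)ᴴ * A = diagonal s := by
  have hs : ∀ i, (s i)⁻¹ * s i ^ 2 = s i := by
    intro i
    by_cases hi : s i = 0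
    · simp [hi]
    · field_simp
  calc _ = diagonal s⁻¹ * (Aᴴ * A) := by
        simp only [conjTranspose_mul, diagonal_conjTranspose, star_trivial, Matrix.mul_assoc]
    _ = _ := by simp only [h, diagonal_mul_diagonal, Pi.inv_apply, Pi.pow_apply, hs]

end OrthogonalColumns

theorem exists_partialIsometries_traceNorm_eq_trace {m k : Type*} [Fintype m] [Fintype k]
    [DecidableEq k] (B : Matrix m k ℝ) :
    ∃ (W : Matrix m k ℝ) (V : Matrix k k ℝ),
      W * Wᴴ * W = W ∧ V * Vᴴ * V = V ∧ traceNorm B = (Wᴴ * B * V).trace := by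
  have hM := posSemidef_conjTranspose_mul_self B
  obtain ⟨U, hUU, hdiag⟩ : ∃ U : Matrix k k ℝ,
      U * Uᴴ = 1 ∧ Uᴴ * (Bᴴ * B) * U = diagonal hM.1.eigenvalues := by
    refine ⟨_, Unitary.coe_mul_star_self hM.1.eigenvectorUnitary, ?_⟩
    have h := hM.1.conjStarAlgAut_star_eigenvectorUnitary
    rw [Unitary.conjStarAlgAut_star_apply] at h
    simpa [star_eq_conjTranspose] using h
  set s : k → ℝ := fun i => √(hM.1.eigenvalues i)
  have hBU : (B * U)ᴴ * (B * U) = diagonal (s ^ 2) := by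
    convert hdiag using 2
    · simp only [conjTranspose_mul, Matrix.mul_assoc]
    · ext i
      exact Real.sq_sqrt (hM.eigenvalues_nonneg i)
  refine ⟨B * U * diagonal s⁻¹, U, mul_diagonal_inv_partialIsometry hBU,
    by rw [hUU, Matrix.one_mul], ?_⟩
  rw [Matrix.mul_assoc _ B, conjTranspose_mul_diagonal_inv_mul_self hBU, trace_diagonal,
    traceNorm_eq_sum_sqrt_eigenvalues]

namespace Matrix.PosSemidef

variable {m k ι : Type*} {ρ : Matrix (m ⊕ k) (m ⊕ k) ℝ}

theorem toBlocks₁₁ (hρ : ρ.PosSemidef) : ρ.toBlocks₁₁.PosSemidef := hρ.submatrix Sum.inl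

theorem toBlocks₂₂ (hρ : ρ.PosSemidef) : ρ.toBlocks₂₂.PosSemidef := hρ.submatrix Sum.inr

theorem sq_apply_le {A : Matrix m m ℝ} (hA : A.PosSemidef) (i j : m) :
    A i j ^ 2 ≤ A i i * A j j := by
  have hdet := (hA.submatrix ![i, j]).det_nonneg
  have hsymm : A j i = A i j := hA.isHermitian.apply i j
  simp only [det_fin_two, submatrix_apply, Matrix.cons_val_zero, Matrix.cons_val_one, hsymm]
    at hdet
  nlinarith

theorem trace_toBlocks₁₂_sq_le [Fintype ι] {σ : Matrix (ι ⊕ ι) (ι ⊕ ι) ℝ}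
    (hσ : σ.PosSemidef) :
    σ.toBlocks₁₂.trace ^ 2 ≤ σ.toBlocks₁₁.trace * σ.toBlocks₂₂.trace :=
  Finset.sum_sq_le_sum_mul_sum_of_sq_le_mul _ (fun _ _ => hσ.diag_nonneg)
    (fun _ _ => hσ.diag_nonneg) (fun i _ => hσ.sq_apply_le (.inl i) (.inr i))

-- `1 - W Wᴴ` is a Hermitian projection `C = Cᴴ C`, so `tr P - tr (Wᴴ P W) = tr (C P Cᴴ) ≥ 0`.
theorem trace_conjTranspose_mul_mul_le [Fintype m] [Fintype ι] [DecidableEq m]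
    {P : Matrix m m ℝ} (hP : P.PosSemidef) {W : Matrix m ι ℝ} (hW : W * Wᴴ * W = W) :
    (Wᴴ * P * W).trace ≤ P.trace := by
  let C := 1 - W * Wᴴ
  have hC : Cᴴ * C = C := by
    have hproj : W * Wᴴ * (W * Wᴴ) = W * Wᴴ := by rw [← Matrix.mul_assoc, hW]
    simp only [C, conjTranspose_sub, conjTranspose_one, conjTranspose_mul,
      conjTranspose_conjTranspose, sub_mul, mul_sub, Matrix.one_mul, Matrix.mul_one, hproj]
    abel
  have hnonneg := (hP.mul_mul_conjTranspose_same C).trace_nonneg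
  rw [trace_mul_cycle, hC, Matrix.sub_mul, trace_sub, Matrix.one_mul, Matrix.mul_assoc,
    trace_mul_comm] at hnonneg
  linarith

theorem trace_mul_toBlocks₁₂_mul_sq_le [Fintype m] [Fintype k] [Fintype ι] [DecidableEq m]
    [DecidableEq k] (hρ : ρ.PosSemidef)
    {W : Matrix m ι ℝ} {V : Matrix k ι ℝ} (hW : W * Wᴴ * W = W) (hV : V * Vᴴ * V = V) :
    (Wᴴ * ρ.toBlocks₁₂ * V).trace ^ 2 ≤ ρ.toBlocks₁₁.trace * ρ.toBlocks₂₂.trace := by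
  have hP := hρ.toBlocks₁₁
  have hQ := hρ.toBlocks₂₂
  have hcompressed := hρ.conjTranspose_mul_mul_same (fromBlocks W 0 0 V)
  rw [← fromBlocks_toBlocks ρ, fromBlocks_conjTranspose, fromBlocks_multiply,
    fromBlocks_multiply] at hcompressed
  have hcs := hcompressed.trace_toBlocks₁₂_sq_le
  simp only [toBlocks_fromBlocks₁₁, toBlocks_fromBlocks₁₂, toBlocks_fromBlocks₂₂,
    conjTranspose_zero, Matrix.zero_mul, Matrix.mul_zero, add_zero, zero_add] at hcs
  calc _ ≤ (Wᴴ * ρ.toBlocks₁₁ * W).trace * (Vᴴ * ρ.toBlocks₂₂ * V).trace := hcs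
    _ ≤ ρ.toBlocks₁₁.trace * ρ.toBlocks₂₂.trace :=
      mul_le_mul (hP.trace_conjTranspose_mul_mul_le hW) (hQ.trace_conjTranspose_mul_mul_le hV)
        (hQ.conjTranspose_mul_mul_same V).trace_nonneg hP.trace_nonneg

end Matrix.PosSemidef

/-- for a density matrix ρ in 2×2 block form,
‖ρ₁₁‖_tr² + 2‖ρ₁₂‖_tr² + ‖ρ₂₂‖_tr² ≤ 1. -/
theorem block_trace_norms_sq_le_one {m k : Type*}
    [Fintype m] [Fintype k] [DecidableEq m] [DecidableEq k]
    (ρ : Matrix (m ⊕ k) (m ⊕ k) ℝ) (hρ : ρ.PosSemidef) (htr : ρ.trace = 1) :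
    traceNorm ρ.toBlocks₁₁ ^ 2 + 2 * traceNorm ρ.toBlocks₁₂ ^ 2 +
      traceNorm ρ.toBlocks₂₂ ^ 2 ≤ 1 := by
  obtain ⟨W, V, hW, hV, hB⟩ := exists_partialIsometries_traceNorm_eq_trace ρ.toBlocks₁₂
  have hB_sq := hρ.trace_mul_toBlocks₁₂_mul_sq_le hW hV
  have htr_blocks : ρ.toBlocks₁₁.trace + ρ.toBlocks₂₂.trace = 1 := by
    rw [← htr]
    simp [trace, Fintype.sum_sum_type, Matrix.toBlocks₁₁, Matrix.toBlocks₂₂]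
  rw [hB, traceNorm_eq_trace hρ.toBlocks₁₁, traceNorm_eq_trace hρ.toBlocks₂₂]
  nlinarith
end
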